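/- Fix positive integers s₁, s₂ and an integer i with 1 ≤ i ≤ s₁s₂. For a finitely supported I : ℤ×ℤ → ℝ define the i-th min-max convolution eigenvalue σᵢ(I) as the infimum, over all families (Y_j)_{j=1,…,i−1} of functions supported in the s₁×s₂ grid, of the supremum of ‖I⊗X‖_F over all X supported in the s₁×s₂ grid with ‖X‖_F = 1 and ⟨X, Y_j⟩ = 0 for all j = 1,…,i−1. Then for every kernel K in the simplex S and every finitely supported I, one has σᵢ(I⊗K) ≤ σᵢ(I). -/

import Mathlib

/-- Images, kernels, and filters: finitely supported functions `ℤ × ℤ → ℝ`. -/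
abbrev Img := (ℤ × ℤ) →₀ ℝ

/-- Discrete 2D convolution: `(X ⊗ Y)(i,j) = ∑_{(u,v)} X((i,j)-(u,v)) * Y(u,v)`. -/
noncomputable def conv (X Y : Img) : Img :=
  X.sum fun a xa => Y.sum fun b yb => Finsupp.single (a + b) (xa * yb)

/-- Frobenius norm `‖X‖_F = √(∑ X(i,j)²)`. -/
noncomputable def frob (X : Img) : ℝ := Real.sqrt (X.sum fun _ c => c ^ 2)

/-- Inner product `⟨X, Y⟩ = ∑ X(i,j) * Y(i,j)`. -/
noncomputable def inner2 (X Y : Img) : ℝ := X.sum fun p c => c * Y p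

/-- ℓ¹ norm `‖X‖₁ = ∑ |X(i,j)|`. -/
noncomputable def l1 (X : Img) : ℝ := X.sum fun _ c => |c|

/-- The simplex `S` of blur kernels: nonnegative entries summing to one. -/
def InSimplex (K : Img) : Prop := (∀ p, 0 ≤ K p) ∧ (K.sum fun _ c => c) = 1

/-- `X` is supported in the `a × b` grid `{0,…,a-1} × {0,…,b-1}`. -/
def SuppIn (a b : ℕ) (X : Img) : Prop :=
  ∀ p : ℤ × ℤ, ¬(0 ≤ p.1 ∧ p.1 < (a : ℤ) ∧ 0 ≤ p.2 ∧ p.2 < (b : ℤ)) → X p = 0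

/-- The `i`-th min-max convolution eigenvalue of `I`, with sampling sizes `s₁, s₂`. -/
noncomputable def sigmaEig (s₁ s₂ i : ℕ) (I : Img) : ℝ :=
  sInf { r : ℝ | ∃ Y : Fin (i - 1) → Img, (∀ j, SuppIn s₁ s₂ (Y j)) ∧
    r = sSup { t : ℝ | ∃ X : Img, SuppIn s₁ s₂ X ∧ frob X = 1 ∧
      (∀ j, inner2 X (Y j) = 0) ∧ t = frob (conv I X) } }

/-!
By Young's inequality `‖A ⊗ Z‖_F ≤ ‖A‖₁ ‖Z‖_F`, and `‖K‖₁ = 1` for `K ∈ S`, so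
`‖(I ⊗ K) ⊗ X‖_F = ‖K ⊗ (I ⊗ X)‖_F ≤ ‖I ⊗ X‖_F` for every `X`. Both the inner supremum and the
outer infimum defining `σᵢ` are monotone in the quantity `‖I ⊗ X‖_F`, which gives the claim.
-/

lemma conv_eq_coeff_mul (A B : Img) :
    conv A B = (AddMonoidAlgebra.ofCoeff A * AddMonoidAlgebra.ofCoeff B).coeff := by
  rw [AddMonoidAlgebra.mul_def]
  simp [conv, Finsupp.sum, AddMonoidAlgebra.coeff_sum, AddMonoidAlgebra.coeff_single]

lemma conv_comm (A B : Img) : conv A B = conv B A := by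
  simp only [conv_eq_coeff_mul, mul_comm]

lemma conv_assoc (A B C : Img) : conv (conv A B) C = conv A (conv B C) := by
  simp only [conv_eq_coeff_mul, AddMonoidAlgebra.ofCoeff_coeff, mul_assoc]

lemma conv_eq_sum_smul_mapDomain (A Z : Img) :
    conv A Z = ∑ a ∈ A.support, A a • Z.mapDomain (a + ·) := by
  rw [conv, Finsupp.sum]
  refine Finset.sum_congr rfl fun a _ => ?_
  rw [Finsupp.mapDomain, Finsupp.smul_sum]
  exact Finsupp.sum_congr fun b _ => by rw [Finsupp.smul_single]; rfl

lemma frob_nonneg (X : Img) : 0 ≤ frob X := Real.sqrt_nonneg _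

lemma frob_zero : frob 0 = 0 := by simp [frob]

noncomputable def restrictEuclidean (s : Finset (ℤ × ℤ)) (X : Img) : EuclideanSpace ℝ s :=
  WithLp.toLp 2 fun p : s => X p

lemma frob_eq_norm_restrictEuclidean {s : Finset (ℤ × ℤ)} {X : Img} (h : X.support ⊆ s) :
    frob X = ‖restrictEuclidean s X‖ := by
  rw [EuclideanSpace.norm_eq, frob, Finsupp.sum_of_support_subset X h _ (by simp),
    ← Finset.sum_coe_sort s]
  simp [restrictEuclidean, Real.norm_eq_abs, sq_abs]

lemma frob_add_le (X Y : Img) : frob (X + Y) ≤ frob X + frob Y := by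
  classical
  set s := X.support ∪ Y.support
  rw [frob_eq_norm_restrictEuclidean (Finsupp.support_add : (X + Y).support ⊆ s),
    frob_eq_norm_restrictEuclidean (Finset.subset_union_left : X.support ⊆ s),
    frob_eq_norm_restrictEuclidean (Finset.subset_union_right : Y.support ⊆ s)]
  have hadd : restrictEuclidean s (X + Y) = restrictEuclidean s X + restrictEuclidean s Y := by
    ext p
    simp [restrictEuclidean]
  exact hadd ▸ norm_add_le _ _

lemma frob_sum_le {ι : Type*} (s : Finset ι) (f : ι → Img) :
    frob (∑ a ∈ s, f a) ≤ ∑ a ∈ s, frob (f a) :=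
  Finset.le_sum_of_subadditive frob frob_zero.le frob_add_le s f

lemma frob_smul (c : ℝ) (X : Img) : frob (c • X) = |c| * frob X := by
  rw [frob, frob, Finsupp.sum_of_support_subset (c • X) Finsupp.support_smul _ (by simp)]
  simp only [Finsupp.smul_apply, smul_eq_mul, mul_pow]
  rw [← Finset.mul_sum, Real.sqrt_mul (sq_nonneg c), Real.sqrt_sq_eq_abs]
  rfl

lemma frob_mapDomain_of_injective {f : ℤ × ℤ → ℤ × ℤ} (hf : Function.Injective f) (Z : Img) :
    frob (Z.mapDomain f) = frob Z := by
  rw [frob, Finsupp.sum_mapDomain_index_inj hf, frob]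

lemma frob_conv_le_l1_mul_frob (A Z : Img) : frob (conv A Z) ≤ l1 A * frob Z := by
  rw [conv_eq_sum_smul_mapDomain, l1, Finsupp.sum, Finset.sum_mul]
  refine (frob_sum_le _ _).trans (Finset.sum_le_sum fun a _ => ?_)
  rw [frob_smul, frob_mapDomain_of_injective (add_right_injective a)]

lemma InSimplex.l1_eq_one {K : Img} (hK : InSimplex K) : l1 K = 1 := by
  rw [l1, ← hK.2]
  exact Finsupp.sum_congr fun p _ => abs_of_nonneg (hK.1 p)

lemma frob_conv_conv_le_of_inSimplex (I X : Img) {K : Img} (hK : InSimplex K) :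
    frob (conv (conv I K) X) ≤ frob (conv I X) := by
  rw [conv_comm I K, conv_assoc]
  simpa [hK.l1_eq_one] using frob_conv_le_l1_mul_frob K (conv I X)

section MinMax

variable (s₁ s₂ : ℕ) {n : ℕ}

noncomputable def maxGain (Y : Fin n → Img) (I : Img) : ℝ :=
  sSup { t : ℝ | ∃ X : Img, SuppIn s₁ s₂ X ∧ frob X = 1 ∧
    (∀ j, inner2 X (Y j) = 0) ∧ t = frob (conv I X) }

lemma sigmaEig_eq_sInf_maxGain (i : ℕ) (I : Img) :
    sigmaEig s₁ s₂ i I =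
      sInf { r : ℝ | ∃ Y : Fin (i - 1) → Img, (∀ j, SuppIn s₁ s₂ (Y j)) ∧ r = maxGain s₁ s₂ Y I } :=
  rfl

lemma maxGain_nonneg (Y : Fin n → Img) (I : Img) : 0 ≤ maxGain s₁ s₂ Y I :=
  Real.sSup_nonneg (by rintro t ⟨X, -, -, -, rfl⟩; exact frob_nonneg _)

lemma maxGain_mono {I J : Img} (hIJ : ∀ X, frob (conv J X) ≤ frob (conv I X))
    (Y : Fin n → Img) : maxGain s₁ s₂ Y J ≤ maxGain s₁ s₂ Y I := by
  rcases Set.eq_empty_or_nonempty { t : ℝ | ∃ X : Img, SuppIn s₁ s₂ X ∧ frob X = 1 ∧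
      (∀ j, inner2 X (Y j) = 0) ∧ t = frob (conv J X) } with hempty | hne
  · rw [maxGain, hempty, Real.sSup_empty]
    exact maxGain_nonneg s₁ s₂ Y I
  have hbdd : BddAbove { t : ℝ | ∃ X : Img, SuppIn s₁ s₂ X ∧ frob X = 1 ∧
      (∀ j, inner2 X (Y j) = 0) ∧ t = frob (conv I X) } := by
    refine ⟨l1 I, ?_⟩
    rintro t ⟨X, -, hX, -, rfl⟩
    simpa [hX] using frob_conv_le_l1_mul_frob I X
  refine csSup_le hne ?_
  rintro t ⟨X, hsupp, hX, horth, rfl⟩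
  exact (hIJ X).trans (le_csSup hbdd ⟨X, hsupp, hX, horth, rfl⟩)

lemma sigmaEig_mono (i : ℕ) {I J : Img} (hIJ : ∀ X, frob (conv J X) ≤ frob (conv I X)) :
    sigmaEig s₁ s₂ i J ≤ sigmaEig s₁ s₂ i I := by
  rw [sigmaEig_eq_sInf_maxGain, sigmaEig_eq_sInf_maxGain]
  refine le_csInf ⟨_, fun _ => 0, fun _ _ _ => rfl, rfl⟩ ?_
  rintro r ⟨Y, hY, rfl⟩
  have hbdd : BddBelow { r : ℝ | ∃ Y : Fin (i - 1) → Img, (∀ j, SuppIn s₁ s₂ (Y j)) ∧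
      r = maxGain s₁ s₂ Y J } := ⟨0, by rintro r ⟨Y, -, rfl⟩; exact maxGain_nonneg s₁ s₂ Y J⟩
  exact csInf_le_of_le hbdd ⟨Y, hY, rfl⟩ (maxGain_mono s₁ s₂ hIJ Y)

end MinMax

theorem sigmaEig_conv_le_general (s₁ s₂ : ℕ)
    (i : ℕ)
    (I K : Img) (hK : InSimplex K) :
    sigmaEig s₁ s₂ i (conv I K) ≤ sigmaEig s₁ s₂ i I :=
  sigmaEig_mono s₁ s₂ i fun X => frob_conv_conv_le_of_inSimplex I X hK

/-- Blurring by a simplex kernel does not increase the convolution eigenvalues. -/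
theorem sigmaEig_conv_le (s₁ s₂ : ℕ) (hs₁ : 0 < s₁) (hs₂ : 0 < s₂)
    (i : ℕ) (hi₁ : 1 ≤ i) (hi₂ : i ≤ s₁ * s₂)
    (I K : Img) (hK : InSimplex K) :
    sigmaEig s₁ s₂ i (conv I K) ≤ sigmaEig s₁ s₂ i I :=
  sigmaEig_conv_le_general s₁ s₂ i I K hK
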